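/- arXiv:2101.01013 — 2 statements merged into one kernel-verified Lean document; each statement's English description precedes it below -/
import Mathlib

section
/- The space X = {x_n : n ∈ ℕ} ⊂ ℓ^∞(ℕ), where x_n = (log 2, …, log(n+1), 0, …), has bounded geometry: for every r > 0 there is N such that every closed ball of radius r in X contains at most N points. Moreover the finite sets F_n = {x_1, …, x_n} form a Følner sequence: for each r > 0, the r-neighborhood of F_n equals F_n once log(n+1) > r. -/
noncomputable section
noncomputable section

/-- `x_n = (log 2, log 3, …, log (n+1), 0, 0, …)`: entry `log (k+1)` in positions
`k = 1, …, n` and `0` elsewhere. -/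
def xseq (n : ℕ) : ℕ → ℝ := fun k => if 1 ≤ k ∧ k ≤ n then Real.log (k + 1) else 0

/-- `x'_n = (log 2, log 2, log 3, log 3, …, log (n+1), log (n+1), 0, …)`: each entry
`log k`, `2 ≤ k ≤ n+1`, repeated twice, occupying positions `1, …, 2n`. -/
def xseq' (n : ℕ) : ℕ → ℝ :=
  fun k => if 1 ≤ k ∧ k ≤ 2 * n then Real.log (((k + 1) / 2 + 1 : ℕ) : ℝ) else 0

/-- The sup-metric of `ℓ^∞(ℕ)`. -/
def dsup (x y : ℕ → ℝ) : ℝ := ⨆ k : ℕ, |x k - y k|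

open Real

lemma xseq_nonneg (n k : ℕ) : 0 ≤ xseq n k := by
  unfold xseq
  split_ifs
  exacts [log_nonneg (by linarith), le_rfl]

lemma xseq_le_log_succ (n k : ℕ) : xseq n k ≤ log (n + 1) := by
  unfold xseq
  split_ifs with hk
  · exact log_le_log (by positivity) (by exact_mod_cast Nat.succ_le_succ hk.2)
  · exact log_nonneg (by linarith)

lemma xseq_of_lt {n k : ℕ} (h : n < k) : xseq n k = 0 := by
  simp only [xseq]
  exact if_neg (by omega)

lemma xseq_self {m : ℕ} (hm : 1 ≤ m) : xseq m m = log (m + 1) := by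
  simp only [xseq]
  exact if_pos ⟨hm, le_rfl⟩

lemma dsup_comm (x y : ℕ → ℝ) : dsup x y = dsup y x := by
  simp only [dsup, abs_sub_comm]

-- The two points differ most at the last nonzero coordinate of the longer one.
lemma dsup_xseq_of_lt {n m : ℕ} (h : n < m) :
    dsup (xseq n) (xseq m) = log (m + 1) := by
  have hle : ∀ k, |xseq n k - xseq m k| ≤ log (m + 1) := fun k =>
    abs_sub_le_of_nonneg_of_le (xseq_nonneg n k)
      ((xseq_le_log_succ n k).trans (log_le_log (by positivity) (by gcongr)))
      (xseq_nonneg m k) (xseq_le_log_succ m k)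
  have hm : |xseq n m - xseq m m| = log (m + 1) := by
    rw [xseq_of_lt h, xseq_self (by omega), zero_sub, abs_neg,
      abs_of_nonneg (log_nonneg (by linarith))]
  exact le_antisymm (ciSup_le hle) (hm ▸ le_ciSup ⟨_, Set.forall_mem_range.2 hle⟩ m)

lemma dsup_xseq_of_ne {n m : ℕ} (h : n ≠ m) :
    dsup (xseq n) (xseq m) = log (max n m + 1) := by
  rcases h.lt_or_gt with h | h
  · rw [dsup_xseq_of_lt h, max_eq_right h.le]
  · rw [dsup_comm, dsup_xseq_of_lt h, max_eq_left h.le]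

lemma log_succ_le_dsup_xseq {n m : ℕ} (h : n ≠ m) :
    log (m + 1) ≤ dsup (xseq n) (xseq m) := by
  rw [dsup_xseq_of_ne h]
  exact log_le_log (by positivity) (by exact_mod_cast Nat.succ_le_succ (le_max_right n m))

lemma ball_xseq_subset (n : ℕ) (r : ℝ) :
    {m : ℕ | 1 ≤ m ∧ dsup (xseq n) (xseq m) ≤ r} ⊆ insert n (Set.Icc 1 ⌊exp r⌋₊) := by
  rintro m ⟨hm, hd⟩
  rcases eq_or_ne m n with rfl | hmn
  · exact Set.mem_insert m _
  · have hlog : log (m + 1) ≤ r := (log_succ_le_dsup_xseq hmn.symm).trans hd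
    rw [log_le_iff_le_exp (by positivity)] at hlog
    exact Set.mem_insert_of_mem n ⟨hm, Nat.le_floor (by linarith)⟩

lemma ball_xseq_finite_and_ncard_le (n : ℕ) (r : ℝ) :
    {m : ℕ | 1 ≤ m ∧ dsup (xseq n) (xseq m) ≤ r}.Finite ∧
      {m : ℕ | 1 ≤ m ∧ dsup (xseq n) (xseq m) ≤ r}.ncard ≤ ⌊exp r⌋₊ + 1 := by
  have hfin : (insert n (Set.Icc 1 ⌊exp r⌋₊)).Finite := (Set.finite_Icc _ _).insert n
  refine ⟨hfin.subset (ball_xseq_subset n r), ?_⟩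
  calc _ ≤ (insert n (Set.Icc 1 ⌊exp r⌋₊)).ncard := Set.ncard_le_ncard (ball_xseq_subset n r) hfin
    _ ≤ (Set.Icc 1 ⌊exp r⌋₊).ncard + 1 := Set.ncard_insert_le _ _
    _ ≤ ⌊exp r⌋₊ + 1 := by rw [Set.ncard_Icc_nat]; omega

lemma neighborhood_xseq_eq_Icc {r : ℝ} (hr : 0 ≤ r) {n : ℕ} (hn : r < log (n + 1)) :
    {m : ℕ | 1 ≤ m ∧ ∃ i : ℕ, 1 ≤ i ∧ i ≤ n ∧ dsup (xseq m) (xseq i) ≤ r} = Set.Icc 1 n := by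
  ext m
  refine ⟨fun ⟨hm, i, _, hin, hd⟩ => ⟨hm, ?_⟩, fun ⟨hm, hmn⟩ => ⟨hm, m, hm, hmn, ?_⟩⟩
  · by_contra! hnm
    have : log (n + 1) ≤ log (m + 1) := log_le_log (by positivity) (by exact_mod_cast Nat.succ_le_succ hnm.le)
    have := log_succ_le_dsup_xseq (show i ≠ m by omega)
    rw [dsup_comm] at hd
    linarith
  · simpa [dsup] using hr

/-- the space `X = {x_n : n ≥ 1}` has bounded geometry (balls of radius
`r` contain at most `N = N(r)` points), and the sets `F_n = {x_1, …, x_n}` form a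
Følner sequence: the `r`-neighborhood of `F_n` equals `F_n` once `log (n+1) > r`.
(Points are identified with their indices `m ≥ 1`, since `m ↦ x_m` is injective.) -/
theorem stmt7 :
    (∀ r : ℝ, 0 < r → ∃ N : ℕ, ∀ n : ℕ, 1 ≤ n →
      {m : ℕ | 1 ≤ m ∧ dsup (xseq n) (xseq m) ≤ r}.Finite ∧
      {m : ℕ | 1 ≤ m ∧ dsup (xseq n) (xseq m) ≤ r}.ncard ≤ N) ∧
    (∀ r : ℝ, 0 < r → ∀ n : ℕ, r < Real.log (n + 1) →
      {m : ℕ | 1 ≤ m ∧ ∃ i : ℕ, 1 ≤ i ∧ i ≤ n ∧ dsup (xseq m) (xseq i) ≤ r}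
        = Set.Icc 1 n) :=
  ⟨fun r _ => ⟨⌊exp r⌋₊ + 1, fun n _ => ball_xseq_finite_and_ncard_le n r⟩,
    fun _ hr _ hn => neighborhood_xseq_eq_Icc hr.le hn⟩

end
end
end

section
/- Let X be a metric space that is not an R-space, witnessed by C > 0 and sequences (x_n), (y_n) with |d_X(x_n,x_m) − d_X(y_n,y_m)| < C for all n, m and d_X(x_n,y_n) → ∞. Suppose moreover d_X(x_k, y_n) > k for all k, n. Define d₁(x,y') = min_n [d_X(x,x_n) + C + d_X(y_n,y)]. Then d₁, together with d_X on the two copies, is a metric on the double X ⊔ X'. -/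
/-- A function `d : α → α → ℝ` is a metric. -/
def IsMetric {α : Type*} (d : α → α → ℝ) : Prop :=
  (∀ p q, d p q = 0 ↔ p = q) ∧ (∀ p q, d p q = d q p) ∧ ∀ p q r, d p r ≤ d p q + d q r

/-- The distance on the double `X ⊔ X'` built from sequences `(x_n)`, `(y_n)` and
`C > 0`: `d_X` within each copy and `d₁(a, c') = inf_n [d_X(a, x_n) + C + d_X(y_n, c)]`
between the copies. -/
noncomputable def D1 {X : Type*} [MetricSpace X] (x y : ℕ → X) (C : ℝ) :
    X ⊕ X → X ⊕ X → ℝ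
  | Sum.inl p, Sum.inl q => dist p q
  | Sum.inr p, Sum.inr q => dist p q
  | Sum.inl p, Sum.inr q => ⨅ n : ℕ, dist p (x n) + C + dist (y n) q
  | Sum.inr q, Sum.inl p => ⨅ n : ℕ, dist p (x n) + C + dist (y n) q

/-!
`D1 x y C` is the approximate gluing `Metric.glueDist x y C` of `X` to a copy of itself along
the sequences `x` and `y`, with gluing constant `C`. Mathlib makes `glueDist Φ Ψ ε` a metric as
soon as `ε > 0` and the distortion `|d(Φ p, Φ q) - d(Ψ p, Ψ q)|` is at most `2ε`; here the
distortion is even below `C`.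
-/

open Metric

theorem isMetric_dist (α : Type*) [MetricSpace α] : IsMetric (dist : α → α → ℝ) :=
  ⟨fun _ _ => dist_eq_zero, dist_comm, dist_triangle⟩

theorem isMetric_glueDist {X Y Z : Type*} [MetricSpace X] [MetricSpace Y] [Nonempty Z]
    {Φ : Z → X} {Ψ : Z → Y} {ε : ℝ} (hε : 0 < ε)
    (H : ∀ p q, |dist (Φ p) (Φ q) - dist (Ψ p) (Ψ q)| ≤ 2 * ε) :
    IsMetric (glueDist Φ Ψ ε) :=
  @isMetric_dist _ (glueMetricApprox Φ Ψ ε hε H)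

theorem iInf_dist_add_const_add_dist {ι X Y : Type*} [Nonempty ι] [MetricSpace X]
    [MetricSpace Y] (x : ι → X) (y : ι → Y) (C : ℝ) (p : X) (q : Y) :
    ⨅ n, dist p (x n) + C + dist (y n) q = (⨅ n, dist p (x n) + dist q (y n)) + C := by
  have hbdd : BddBelow (Set.range fun n => dist p (x n) + dist q (y n)) :=
    ⟨0, Set.forall_mem_range.2 fun _ => by positivity⟩
  rw [← OrderIso.addRight_apply C, OrderIso.map_ciInf _ hbdd]
  simp only [OrderIso.addRight_apply, dist_comm q, add_right_comm]

theorem D1_eq_glueDist {X : Type*} [MetricSpace X] (x y : ℕ → X) (C : ℝ) :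
    D1 x y C = glueDist x y C := by
  ext (p | p) (q | q) <;> simp only [D1, glueDist, iInf_dist_add_const_add_dist]

theorem stmt19_general {X : Type*} [MetricSpace X] (C : ℝ) (hC : 0 < C) (x y : ℕ → X)
    (h1 : ∀ n m, |dist (x n) (x m) - dist (y n) (y m)| < C) :
    IsMetric (D1 x y C) := by
  rw [D1_eq_glueDist]
  exact isMetric_glueDist hC fun n m => (h1 n m).le.trans (by linarith)

/-- if `(x_n)`, `(y_n)` witness that `X` is not an R-space, i.e.
`|d_X(x_n, x_m) - d_X(y_n, y_m)| < C` for all `n, m` and `d_X(x_n, y_n) → ∞`, and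
moreover `d_X(x_k, y_n) > k` for all `k, n`, then `d₁`, together with `d_X` on the
two copies, is a metric on the double `X ⊔ X'`. -/
theorem stmt19 {X : Type*} [MetricSpace X] (C : ℝ) (hC : 0 < C) (x y : ℕ → X)
    (h1 : ∀ n m, |dist (x n) (x m) - dist (y n) (y m)| < C)
    (h2 : Filter.Tendsto (fun n => dist (x n) (y n)) Filter.atTop Filter.atTop)
    (h3 : ∀ k n : ℕ, (k : ℝ) < dist (x k) (y n)) :
    IsMetric (D1 x y C) :=
  stmt19_general C hC x y h1
end
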